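/- arXiv:2106.06100 — 3 statements merged into one kernel-verified Lean document; each statement's English description precedes it below -/
import Mathlib

section
/- For every positive integer n and every real a > 0, the origin is an asymptotically stable equilibrium of the Liénard system L_a: for every ε > 0 there exists δ > 0 such that every solution (x, y) of L_a with x(0)² + y(0)² < δ² satisfies x(t)² + y(t)² < ε² for all t ≥ 0 and (x(t), y(t)) → (0, 0) as t → +∞. -/
/-
The energy `x² + y²` is only a weak Lyapunov function: along solutions its derivative is
`-2a(1 - x²ⁿ)x²`, which vanishes on the `y`-axis. Adding a small cross term gives
`V = x² + y² - βxy` with `β = a / (1 + a²)`, whose derivative is bounded by `-(β/2)(x² + y²)`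
on the strip `x² ≤ 1/4`, where the damping `a(1 - x²ⁿ)` lies in `[3a/4, a]`. Since `V` is
comparable to `x² + y²`, small sublevel sets of `V` lie in that strip, and a comparison
argument gives exponential decay of `V`, hence stability and convergence to the origin.
-/

open Filter Topology Set

/-- `(x, y)` is a solution of the Liénard system
`ẋ = y + a (x^(2n) - 1) x`, `ẏ = -x`. -/
def IsSolLienard (n : ℕ) (a : ℝ) (x y : ℝ → ℝ) : Prop :=
  ∀ t : ℝ, HasDerivAt x (y t + a * ((x t) ^ (2 * n) - 1) * x t) t ∧
    HasDerivAt y (-x t) t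

theorem le_mul_exp_of_hasDerivAt_le_neg_mul {W W' : ℝ → ℝ} {C k k' : ℝ}
    (hW : ∀ t, HasDerivAt W (W' t) t) (hC : 0 < C) (hk' : 0 ≤ k') (hkk' : k' < k)
    (hW0 : W 0 ≤ C) (hdecay : ∀ t, 0 ≤ t → W t ≤ C → W' t ≤ -k * W t) :
    ∀ t, 0 ≤ t → W t ≤ C * Real.exp (-k' * t) := by
  intro t ht
  have hB : ∀ s, HasDerivAt (fun s => C * Real.exp (-k' * s)) (C * Real.exp (-k' * s) * -k') s :=
    fun s => (((hasDerivAt_id s).const_mul (-k')).exp.const_mul C).congr_deriv (by simp; ring)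
  refine image_le_of_deriv_right_lt_deriv_boundary (f := W) (a := 0) (b := t)
    (fun s _ => (hW s).continuousAt.continuousWithinAt) (fun s _ => (hW s).hasDerivWithinAt)
    (by simpa using hW0) hB ?_ ⟨ht, le_rfl⟩
  intro s hs hWs
  have hpos : 0 < C * Real.exp (-k' * s) := by positivity
  have hle : C * Real.exp (-k' * s) ≤ C :=
    mul_le_of_le_one_right hC.le (Real.exp_le_one_iff.2 (by nlinarith [hs.1]))
  calc W' s ≤ -k * W s := hdecay s hs.1 (hWs ▸ hle)
    _ < C * Real.exp (-k' * s) * -k' := by rw [hWs]; nlinarith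

theorem tendsto_prodMk_zero_of_sq_add_sq_le {α : Type*} {l : Filter α} {x y g : α → ℝ}
    (hle : ∀ᶠ t in l, x t ^ 2 + y t ^ 2 ≤ g t) (hg : Tendsto g l (𝓝 0)) :
    Tendsto (fun t => (x t, y t)) l (𝓝 (0, 0)) := by
  have hsqrt : Tendsto (fun t => √(g t)) l (𝓝 0) := by
    simpa [Function.comp_def] using (Real.continuous_sqrt.tendsto 0).comp hg
  have of_sq_le : ∀ f : α → ℝ, (∀ᶠ t in l, f t ^ 2 ≤ g t) → Tendsto f l (𝓝 0) := fun f hf =>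
    squeeze_zero_norm' (hf.mono fun t ht => by
      rw [Real.norm_eq_abs, ← Real.sqrt_sq_eq_abs]; exact Real.sqrt_le_sqrt ht) hsqrt
  exact (of_sq_le x (hle.mono fun t ht => by nlinarith [sq_nonneg (y t)])).prodMk_nhds
    (of_sq_le y (hle.mono fun t ht => by nlinarith [sq_nonneg (x t)]))

section Lyapunov

variable {β c x y : ℝ}

def lienardLyapunov (β x y : ℝ) : ℝ := x ^ 2 + y ^ 2 - β * x * y

theorem sq_add_sq_le_two_mul_lienardLyapunov (hβ : |β| ≤ 1) :
    x ^ 2 + y ^ 2 ≤ 2 * lienardLyapunov β x y := by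
  obtain ⟨hβl, hβu⟩ := abs_le.1 hβ
  unfold lienardLyapunov
  nlinarith [mul_nonneg (sub_nonneg.2 hβu) (sq_nonneg (x + y)),
    mul_nonneg (neg_le_iff_add_nonneg.1 hβl) (sq_nonneg (x - y))]

theorem lienardLyapunov_le_two_mul_sq_add_sq (hβ : |β| ≤ 2) :
    lienardLyapunov β x y ≤ 2 * (x ^ 2 + y ^ 2) := by
  obtain ⟨hβl, hβu⟩ := abs_le.1 hβ
  unfold lienardLyapunov
  nlinarith [mul_nonneg (sub_nonneg.2 hβu) (sq_nonneg (x - y)),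
    mul_nonneg (neg_le_iff_add_nonneg.1 hβl) (sq_nonneg (x + y))]

/-- The derivative of `lienardLyapunov β` along the linear damped oscillator
`ẋ = y - c x`, `ẏ = -x`; the Liénard system is this with damping `c = a (1 - x²ⁿ)`. -/
def dampedLyapunovDeriv (β c x y : ℝ) : ℝ := -(2 * c - β) * x ^ 2 - β * y ^ 2 + β * c * x * y

theorem dampedLyapunovDeriv_le (hβ : 0 ≤ β) (hc : β * (3 + c ^ 2) ≤ 4 * c) :
    dampedLyapunovDeriv β c x y ≤ -(β / 2) * (x ^ 2 + y ^ 2) := by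
  unfold dampedLyapunovDeriv
  nlinarith [mul_nonneg hβ (sq_nonneg (c * x - y)), sq_nonneg x]

end Lyapunov

noncomputable def lienardCrossCoeff (a : ℝ) : ℝ := a / (1 + a ^ 2)

section CrossCoeff

variable {a : ℝ}

theorem lienardCrossCoeff_pos (ha : 0 < a) : 0 < lienardCrossCoeff a := by
  unfold lienardCrossCoeff; positivity

theorem abs_lienardCrossCoeff_le_one (ha : 0 < a) : |lienardCrossCoeff a| ≤ 1 := by
  rw [abs_of_pos (lienardCrossCoeff_pos ha), lienardCrossCoeff, div_le_one (by positivity)]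
  nlinarith [sq_nonneg (a - 1)]

theorem lienardCrossCoeff_mul_le (ha : 0 < a) {c : ℝ} (hc : 3 * a / 4 ≤ c) (hca : c ≤ a) :
    lienardCrossCoeff a * (3 + c ^ 2) ≤ 4 * c := by
  have hβ : lienardCrossCoeff a * (1 + a ^ 2) = a := div_mul_cancel₀ _ (by positivity)
  have hβ0 := lienardCrossCoeff_pos ha
  have hβa : lienardCrossCoeff a ≤ a := by nlinarith
  have hc2 : c ^ 2 ≤ a ^ 2 := by nlinarith
  nlinarith [mul_le_mul_of_nonneg_left hc2 hβ0.le]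

end CrossCoeff

theorem lienard_damping_mem_Icc {n : ℕ} (hn : 0 < n) {a x : ℝ} (ha : 0 ≤ a) (hx : x ^ 2 ≤ 1 / 4) :
    a * (1 - x ^ (2 * n)) ∈ Icc (3 * a / 4) a := by
  have hpow : x ^ (2 * n) ≤ x ^ 2 := by
    rw [pow_mul]; exact pow_le_of_le_one (sq_nonneg x) (by linarith) hn.ne'
  have hpow0 : 0 ≤ x ^ (2 * n) := by rw [pow_mul]; positivity
  constructor <;> nlinarith

namespace IsSolLienard

variable {n : ℕ} {a : ℝ} {x y : ℝ → ℝ}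

theorem hasDerivAt_lienardLyapunov (h : IsSolLienard n a x y) (β t : ℝ) :
    HasDerivAt (fun t => lienardLyapunov β (x t) (y t))
      (dampedLyapunovDeriv β (a * (1 - x t ^ (2 * n))) (x t) (y t)) t := by
  obtain ⟨hx, hy⟩ := h t
  exact (((hx.fun_pow 2).fun_add (hy.fun_pow 2)).fun_sub ((hx.const_mul β).fun_mul hy)).congr_deriv
    (by unfold dampedLyapunovDeriv; ring)

theorem sq_add_sq_le_mul_exp (hn : 0 < n) (ha : 0 < a) (h : IsSolLienard n a x y) {C : ℝ}
    (hC0 : 0 < C) (hC : C ≤ 1 / 8) (h0 : 2 * (x 0 ^ 2 + y 0 ^ 2) ≤ C) :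
    ∀ t, 0 ≤ t → x t ^ 2 + y t ^ 2 ≤ 2 * C * Real.exp (-(lienardCrossCoeff a / 8) * t) := by
  set β := lienardCrossCoeff a
  have hβ := lienardCrossCoeff_pos ha
  have habs := abs_lienardCrossCoeff_le_one ha
  have hdecay : ∀ t, 0 ≤ t → lienardLyapunov β (x t) (y t) ≤ C →
      dampedLyapunovDeriv β (a * (1 - x t ^ (2 * n))) (x t) (y t) ≤
        -(β / 4) * lienardLyapunov β (x t) (y t) := by
    intro t _ hVt
    have hlow := sq_add_sq_le_two_mul_lienardLyapunov (x := x t) (y := y t) habs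
    have hup := lienardLyapunov_le_two_mul_sq_add_sq (x := x t) (y := y t) (by linarith)
    obtain ⟨hc, hca⟩ := lienard_damping_mem_Icc hn ha.le (x := x t) (by nlinarith [sq_nonneg (y t)])
    have := dampedLyapunovDeriv_le (x := x t) (y := y t) hβ.le (lienardCrossCoeff_mul_le ha hc hca)
    nlinarith
  have hV0 := lienardLyapunov_le_two_mul_sq_add_sq (x := x 0) (y := y 0) (by linarith)
  have hV := le_mul_exp_of_hasDerivAt_le_neg_mul (h.hasDerivAt_lienardLyapunov β) hC0
    (by positivity) (by linarith : β / 8 < β / 4) (hV0.trans h0) hdecay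
  intro t ht
  linarith [sq_add_sq_le_two_mul_lienardLyapunov (x := x t) (y := y t) habs, hV t ht]

end IsSolLienard

/-- For every positive integer `n` and every real `a > 0`, the origin is an
asymptotically stable equilibrium of the Liénard system `L_a`. -/
theorem lienard_origin_asymptotically_stable (n : ℕ) (hn : 0 < n) (a : ℝ) (ha : 0 < a) :
    ∀ ε > (0 : ℝ), ∃ δ > (0 : ℝ), ∀ x y : ℝ → ℝ, IsSolLienard n a x y →
      x 0 ^ 2 + y 0 ^ 2 < δ ^ 2 →
      (∀ t : ℝ, 0 ≤ t → x t ^ 2 + y t ^ 2 < ε ^ 2) ∧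
      Tendsto (fun t : ℝ => (x t, y t)) atTop (nhds ((0 : ℝ), (0 : ℝ))) := by
  intro ε hε
  obtain ⟨δ, hδ0, hδε, hδ8⟩ : ∃ δ : ℝ, 0 < δ ∧ δ ≤ ε / 4 ∧ δ ≤ 1 / 8 :=
    ⟨min (ε / 4) (1 / 8), by positivity, min_le_left _ _, min_le_right _ _⟩
  replace hδε : 4 * δ ^ 2 < ε ^ 2 := by nlinarith
  replace hδ8 : 2 * δ ^ 2 ≤ 1 / 8 := by nlinarith
  refine ⟨δ, hδ0, fun x y hsol h0 => ?_⟩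
  have hk : 0 < lienardCrossCoeff a / 8 := by linarith [lienardCrossCoeff_pos ha]
  set k := lienardCrossCoeff a / 8
  have hsq := hsol.sq_add_sq_le_mul_exp hn ha (C := 2 * δ ^ 2) (by positivity) hδ8 (by linarith)
  refine ⟨fun t ht => ?_, tendsto_prodMk_zero_of_sq_add_sq_le
    ((eventually_ge_atTop 0).mono hsq) ?_⟩
  · have hexp : Real.exp (-k * t) ≤ 1 := Real.exp_le_one_iff.2 (by nlinarith)
    nlinarith [hsq t ht]
  · simpa using (Real.tendsto_exp_comp_nhds_zero.2
      (tendsto_id.const_mul_atTop_of_neg (neg_neg_of_pos hk))).const_mul (2 * (2 * δ ^ 2))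
end

section
/- For every positive integer n and every real a < 0, the origin is an unstable equilibrium of the Liénard system L_a: there exists ε > 0 such that for every δ > 0 there is a solution (x, y) of L_a with 0 < x(0)² + y(0)² < δ² and a time t ≥ 0 with x(t)² + y(t)² ≥ ε². -/
/-!
For `a < 0` the quadratic form `W = 2x² - 2axy + (a² + 2)y²` is a Lyapunov function of the
linearisation `ẋ = y - ax, ẏ = -x` at the origin, and on the disc `x² + y² ≤ 1/(4 - a)` its
derivative along `L_a` is still at least `-a (x² + y²)`, because there `x^(2n) ≤ x²` for `n ≥ 1`.
A solution staying in that disc forever would therefore make `W` grow linearly, which is impossible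
since `W` is bounded on the disc; so every solution starting near the origin leaves it.

It remains to produce global solutions through small initial points. Backwards in time the set
`{W ≤ 1/(4 - a)}` is invariant, and forwards `x² + y²` grows at most like `-2at`. Truncating
the field outside a large ball and solving by Picard–Lindelöf therefore gives solutions of `L_a`
on every bounded interval, and these patch together to a global solution.
-/

open Set Metric
open scoped NNReal

section IntegralCurve

variable {E : Type*} [NormedAddCommGroup E] [NormedSpace ℝ E]

theorem ContDiff.exists_lipschitzWith_eqOn_closedBall [FiniteDimensional ℝ E] {F : E → E}
    (hF : ContDiff ℝ 1 F) (R : ℝ) :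
    ∃ (G : E → E) (K : ℝ≥0) (L : ℝ), LipschitzWith K G ∧ (∀ z, ‖G z‖ ≤ L) ∧
      EqOn G F (closedBall 0 R) := by
  let χ : ContDiffBump (0 : E) := ⟨max R 1, max R 1 + 1, by positivity, by linarith⟩
  have hG : ContDiff ℝ 1 fun z => χ z • F z := χ.contDiff.smul hF
  have hsupp : HasCompactSupport fun z => χ z • F z := χ.hasCompactSupport.smul_right
  obtain ⟨K, hK⟩ := hG.lipschitzWith_of_hasCompactSupport hsupp one_ne_zero
  obtain ⟨L, hL⟩ := hG.continuous.bounded_above_of_compact_support hsupp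
  refine ⟨_, K, L, hK, hL, fun z hz => ?_⟩
  simp only [χ.one_of_mem_closedBall (closedBall_subset_closedBall (le_max_left R 1) hz), one_smul]

theorem LipschitzWith.exists_isIntegralCurveOn_Icc [CompleteSpace E] {G : E → E} {K : ℝ≥0}
    {L : ℝ} (hG : LipschitzWith K G) (hL : ∀ z, ‖G z‖ ≤ L) (z₀ : E) {T : ℝ} (hT : 0 ≤ T) :
    ∃ γ : ℝ → E, γ 0 = z₀ ∧ IsIntegralCurveOn γ (fun _ => G) (Icc (-T) T) := by
  have hPL : IsPicardLindelof (fun _ => G) (tmin := -T) (tmax := T) ⟨0, by simp [hT]⟩ z₀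
      (L.toNNReal * T.toNNReal) 0 L.toNNReal K :=
    { lipschitzOnWith := fun _ _ => hG.lipschitzOnWith
      continuousOn := fun _ _ => continuousOn_const
      norm_le := fun _ _ z _ => (hL z).trans (Real.le_coe_toNNReal L)
      mul_max_le := by simp [Real.coe_toNNReal _ hT] }
  exact hPL.exists_eq_forall_mem_Icc_hasDerivWithinAt₀

theorem IsIntegralCurveOn.comp_neg_Icc {γ : ℝ → E} {G : E → E} {T : ℝ}
    (h : IsIntegralCurveOn γ (fun _ => G) (Icc (-T) T)) :
    IsIntegralCurveOn (fun t => γ (-t)) (fun _ => -G) (Icc (-T) T) := by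
  convert h.comp_mul (-1) using 1
  · ext t; simp
  · ext t; simp
  · ext t
    simp only [mem_Icc, mem_ofPred_eq, mul_neg_one, neg_le_neg_iff, neg_le]
    tauto

theorem IsIntegralCurveOn.hasDerivWithinAt_Ici {γ : ℝ → E} {v : ℝ → E → E} {a b t : ℝ}
    (h : IsIntegralCurveOn γ v (Icc a b)) (ht : t ∈ Ico a b) :
    HasDerivWithinAt γ (v t (γ t)) (Ici t) t :=
  (h t (Ico_subset_Icc_self ht)).mono_of_mem_nhdsWithin (Icc_mem_nhdsGE_of_mem ht)

open scoped Manifold in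
theorem exists_isIntegralCurve_of_isIntegralCurveOn_Ioo {F : E → E} (hF : ContDiff ℝ 1 F)
    (z₀ : E) (h : ∀ T : ℝ, ∃ γ, γ 0 = z₀ ∧ IsIntegralCurveOn γ (fun _ => F) (Ioo (-T) T)) :
    ∃ γ, γ 0 = z₀ ∧ IsIntegralCurve γ (fun _ => F) := by
  obtain ⟨γ, hγ0, hγ⟩ := (exists_isMIntegralCurve_iff_exists_isMIntegralCurveOn_Ioo
    (I := 𝓘(ℝ, E)) (v := F) (contMDiff_vectorSpace_iff_contDiff.2 hF) z₀).2 fun T => by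
      obtain ⟨γ, hγ0, hγ⟩ := h T
      refine ⟨γ, hγ0, fun t ht => ?_⟩
      exact ((hγ t ht).hasDerivAt (isOpen_Ioo.mem_nhds ht)).hasFDerivAt.hasFDerivWithinAt
        |>.hasMFDerivWithinAt
  refine ⟨γ, hγ0, fun t => ?_⟩
  have hγt : HasFDerivAt γ ((1 : ℝ →L[ℝ] ℝ).smulRight (F (γ t))) t := (hγ t).hasFDerivAt
  simpa using hγt.hasDerivAt

end IntegralCurve

namespace Lienard

def field (n : ℕ) (a : ℝ) (z : ℝ × ℝ) : ℝ × ℝ :=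
  (z.2 + a * (z.1 ^ (2 * n) - 1) * z.1, -z.1)

def energy (z : ℝ × ℝ) : ℝ := z.1 ^ 2 + z.2 ^ 2

def energyDeriv (z w : ℝ × ℝ) : ℝ := 2 * (z.1 * w.1 + z.2 * w.2)

def lyapunov (a : ℝ) (z : ℝ × ℝ) : ℝ :=
  2 * z.1 ^ 2 - 2 * a * (z.1 * z.2) + (a ^ 2 + 2) * z.2 ^ 2

def lyapunovDeriv (a : ℝ) (z w : ℝ × ℝ) : ℝ :=
  4 * z.1 * w.1 - 2 * a * (w.1 * z.2 + z.1 * w.2) + 2 * (a ^ 2 + 2) * z.2 * w.2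

variable {n : ℕ} {a : ℝ}

theorem contDiff_field : ContDiff ℝ 1 (field n a) := by
  unfold field; fun_prop

theorem continuous_energy : Continuous energy := by
  unfold energy; fun_prop

theorem continuous_lyapunov : Continuous (lyapunov a) := by
  unfold lyapunov; fun_prop

section Deriv

variable {γ : ℝ → ℝ × ℝ} {w : ℝ × ℝ} {s : Set ℝ} {t : ℝ}

theorem _root_.HasDerivWithinAt.energy_comp (h : HasDerivWithinAt γ w s t) :
    HasDerivWithinAt (fun t => energy (γ t)) (energyDeriv (γ t) w) s t := by
  have h₁ := hasFDerivAt_fst.comp_hasDerivWithinAt t h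
  have h₂ := hasFDerivAt_snd.comp_hasDerivWithinAt t h
  refine ((h₁.pow 2).add (h₂.pow 2)).congr_deriv ?_
  simp only [energyDeriv, Function.comp_apply, ContinuousLinearMap.coe_fst',
    ContinuousLinearMap.coe_snd']
  ring

theorem _root_.HasDerivWithinAt.lyapunov_comp (h : HasDerivWithinAt γ w s t) :
    HasDerivWithinAt (fun t => lyapunov a (γ t)) (lyapunovDeriv a (γ t) w) s t := by
  have h₁ := hasFDerivAt_fst.comp_hasDerivWithinAt t h
  have h₂ := hasFDerivAt_snd.comp_hasDerivWithinAt t h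
  refine ((((h₁.pow 2).const_mul 2).sub ((h₁.mul h₂).const_mul (2 * a))).add
    ((h₂.pow 2).const_mul (a ^ 2 + 2))).congr_deriv ?_
  simp only [lyapunovDeriv, Function.comp_apply, ContinuousLinearMap.coe_fst',
    ContinuousLinearMap.coe_snd']
  ring

end Deriv

theorem energy_le_lyapunov (z : ℝ × ℝ) : energy z ≤ lyapunov a z := by
  unfold energy lyapunov
  nlinarith [sq_nonneg (z.1 - a * z.2), sq_nonneg z.2]

theorem lyapunov_le (ha : a ≤ 0) (z : ℝ × ℝ) : lyapunov a z ≤ (a ^ 2 - a + 4) * energy z := by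
  unfold energy lyapunov
  nlinarith [mul_nonneg (neg_nonneg.2 ha) (sq_nonneg (z.1 - z.2)), sq_nonneg (a * z.1)]

theorem mem_closedBall_zero_of_energy_le {z : ℝ × ℝ} {r : ℝ} (hz : energy z ≤ r) (hr : 1 ≤ r) :
    z ∈ closedBall 0 r := by
  have hr₀ : 0 ≤ r := by linarith
  have hr₂ : r ≤ r ^ 2 := by nlinarith
  unfold energy at hz
  rw [mem_closedBall_zero_iff, Prod.norm_def, Real.norm_eq_abs, Real.norm_eq_abs]
  exact max_le (abs_le_of_sq_le_sq (by nlinarith [sq_nonneg z.2]) hr₀)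
    (abs_le_of_sq_le_sq (by nlinarith [sq_nonneg z.1]) hr₀)

theorem energyDeriv_field_le (ha : a ≤ 0) (z : ℝ × ℝ) : energyDeriv z (field n a z) ≤ -2 * a := by
  have key : energyDeriv z (field n a z) = -2 * a * (z.1 ^ 2 - (z.1 ^ 2) ^ (n + 1)) := by
    simp only [energyDeriv, field]; rw [← pow_mul]; ring
  have hu := sq_nonneg z.1
  have : z.1 ^ 2 - (z.1 ^ 2) ^ (n + 1) ≤ 1 := by
    rcases le_or_gt (z.1 ^ 2) 1 with h | h
    · linarith [pow_nonneg hu (n + 1)]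
    · have : z.1 ^ 2 ≤ (z.1 ^ 2) ^ (n + 1) := le_self_pow₀ h.le (by omega)
      linarith
  rw [key]; nlinarith

theorem lyapunovDeriv_field_ge (hn : 0 < n) (ha : a ≤ 0) {z : ℝ × ℝ}
    (hz : energy z * (4 - a) ≤ 1) : -a * energy z ≤ lyapunovDeriv a z (field n a z) := by
  set k := z.1 ^ (2 * n)
  have key : lyapunovDeriv a z (field n a z)
      = -2 * a * energy z + 4 * a * k * z.1 ^ 2 - 2 * a ^ 2 * k * (z.1 * z.2) := by
    simp only [lyapunovDeriv, field, energy]; ring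
  have hN : 0 ≤ energy z := by unfold energy; positivity
  have hx : z.1 ^ 2 ≤ energy z := by unfold energy; nlinarith [sq_nonneg z.2]
  have hxy : 2 * (z.1 * z.2) ≤ energy z := by unfold energy; nlinarith [sq_nonneg (z.1 - z.2)]
  have hk₀ : 0 ≤ k := by simp only [k, pow_mul]; positivity
  have hk : k ≤ energy z := by
    refine le_trans ?_ hx
    calc k = (z.1 ^ 2) ^ n := pow_mul _ _ _
      _ ≤ (z.1 ^ 2) ^ 1 := pow_le_pow_of_le_one (sq_nonneg _) (by nlinarith) hn
      _ = z.1 ^ 2 := pow_one _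
  have h₁ : 4 * a * k * energy z ≤ 4 * a * k * z.1 ^ 2 := by
    nlinarith [mul_nonneg (mul_nonneg (neg_nonneg.2 ha) hk₀) (sub_nonneg.2 hx)]
  have h₂ : -(a ^ 2 * k * energy z) ≤ -(2 * a ^ 2 * k * (z.1 * z.2)) := by
    nlinarith [mul_nonneg (mul_nonneg (sq_nonneg a) hk₀) (sub_nonneg.2 hxy)]
  have h₃ : k * (4 - a) ≤ 1 := le_trans (by nlinarith) hz
  rw [key]
  nlinarith [mul_nonneg (mul_nonneg (neg_nonneg.2 ha) hN) (sub_nonneg.2 h₃)]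

theorem lyapunovDeriv_neg (z w : ℝ × ℝ) : lyapunovDeriv a z (-w) = -lyapunovDeriv a z w := by
  simp only [lyapunovDeriv, Prod.fst_neg, Prod.snd_neg]; ring

theorem energy_le_of_isIntegralCurveOn (ha : a ≤ 0) {H : ℝ × ℝ → ℝ × ℝ} {r T : ℝ}
    (hH : ∀ z, energy z ≤ r → H z = field n a z) {γ : ℝ → ℝ × ℝ}
    (hγ : IsIntegralCurveOn γ (fun _ => H) (Icc 0 T)) (hr : energy (γ 0) + (1 - 2 * a) * T ≤ r) :
    ∀ t ∈ Icc 0 T, energy (γ t) ≤ energy (γ 0) + (1 - 2 * a) * t := by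
  -- the fence needs a slope strictly above the bound `-2a` of `energyDeriv_field_le`
  refine image_le_of_deriv_right_lt_deriv_boundary
    (continuous_energy.comp_continuousOn hγ.continuousOn)
    (fun t ht => (hγ.hasDerivWithinAt_Ici ht).energy_comp) (by simp)
    (fun t => ((hasDerivAt_id t).const_mul (1 - 2 * a)).const_add _) fun t ht heq => ?_
  change energy (γ t) = _ at heq
  have hr' : energy (γ t) ≤ r := by rw [heq]; nlinarith [ht.2]
  rw [hH _ hr']
  linarith [energyDeriv_field_le (n := n) ha (γ t)]

theorem lyapunov_le_of_isIntegralCurveOn (hn : 0 < n) (ha : a < 0) {H : ℝ × ℝ → ℝ × ℝ}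
    {ρ T : ℝ} (hρ : ρ * (4 - a) ≤ 1) (hρ₀ : 0 < ρ) (hH : ∀ z, energy z ≤ ρ → H z = -field n a z)
    {γ : ℝ → ℝ × ℝ} (hγ : IsIntegralCurveOn γ (fun _ => H) (Icc 0 T)) (h₀ : lyapunov a (γ 0) ≤ ρ) :
    ∀ t ∈ Icc 0 T, lyapunov a (γ t) ≤ ρ := by
  refine image_le_of_deriv_right_lt_deriv_boundary
    (continuous_lyapunov.comp_continuousOn hγ.continuousOn)
    (fun t ht => (hγ.hasDerivWithinAt_Ici ht).lyapunov_comp) h₀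
    (fun t => hasDerivAt_const t ρ) fun t _ heq => ?_
  change lyapunov a (γ t) = ρ at heq
  have hN : energy (γ t) ≤ ρ := heq ▸ energy_le_lyapunov (γ t)
  have hM : 0 < a ^ 2 - a + 4 := by nlinarith
  have hN₀ : 0 < energy (γ t) := by
    by_contra! h
    nlinarith [lyapunov_le ha.le (γ t), mul_nonpos_of_nonneg_of_nonpos hM.le h]
  have := lyapunovDeriv_field_ge hn ha.le (z := γ t) (by nlinarith)
  rw [hH _ hN, lyapunovDeriv_neg]
  nlinarith

theorem lyapunov_add_mul_le_of_isIntegralCurveOn (hn : 0 < n) (ha : a < 0) {ρ T c : ℝ}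
    (hρ : ρ * (4 - a) ≤ 1) {γ : ℝ → ℝ × ℝ}
    (hγ : IsIntegralCurveOn γ (fun _ => field n a) (Icc 0 T))
    (hγρ : ∀ t ∈ Icc 0 T, energy (γ t) ≤ ρ) (hc₀ : 0 ≤ c)
    (hc : c * (a ^ 2 - a + 4) < -a * lyapunov a (γ 0)) :
    ∀ t ∈ Icc 0 T, lyapunov a (γ 0) + c * t ≤ lyapunov a (γ t) := by
  refine image_le_of_deriv_right_lt_deriv_boundary' (by fun_prop)
    (fun t _ => (((hasDerivAt_id t).const_mul c).const_add _).hasDerivWithinAt) (by simp)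
    (continuous_lyapunov.comp_continuousOn hγ.continuousOn)
    (fun t ht => (hγ.hasDerivWithinAt_Ici ht).lyapunov_comp) fun t ht heq => ?_
  change lyapunov a (γ 0) + c * t = lyapunov a (γ t) at heq
  have hM : 0 < a ^ 2 - a + 4 := by nlinarith
  have hderiv := lyapunovDeriv_field_ge hn ha.le (z := γ t)
    (by nlinarith [hγρ t (Ico_subset_Icc_self ht)])
  have hW := lyapunov_le ha.le (γ t)
  have : c * (a ^ 2 - a + 4) < lyapunovDeriv a (γ t) (field n a (γ t)) * (a ^ 2 - a + 4) := by
    nlinarith [mul_nonneg (neg_nonneg.2 ha.le) (mul_nonneg hc₀ ht.1),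
      mul_nonneg (neg_nonneg.2 ha.le) (sub_nonneg.2 hW), mul_nonneg hM.le (sub_nonneg.2 hderiv)]
  simpa using lt_of_mul_lt_mul_right this hM.le

theorem exists_energy_ge_of_isIntegralCurve (hn : 0 < n) (ha : a < 0) {ρ : ℝ}
    (hρ : ρ * (4 - a) ≤ 1) {γ : ℝ → ℝ × ℝ} (hγ : IsIntegralCurve γ (fun _ => field n a))
    (h₀ : 0 < energy (γ 0)) : ∃ t, 0 ≤ t ∧ ρ ≤ energy (γ t) := by
  by_contra! h
  set M := a ^ 2 - a + 4
  set W₀ := lyapunov a (γ 0)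
  have hM : 0 < M := by nlinarith
  have hρ₀ : 0 < ρ := h₀.trans (h 0 le_rfl)
  have hW₀ : 0 < W₀ := h₀.trans_le (energy_le_lyapunov _)
  set c := -a * W₀ / (2 * M)
  have hc₀ : 0 < c := div_pos (mul_pos (neg_pos.2 ha) hW₀) (by positivity)
  have hc : c * M < -a * W₀ := by
    rw [div_mul_eq_mul_div, div_lt_iff₀ (by positivity)]; nlinarith [mul_pos (neg_pos.2 ha) hW₀]
  set T := M * ρ / c
  have hT : 0 ≤ T := by positivity
  have hcT : c * T = M * ρ := mul_div_cancel₀ _ hc₀.ne'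
  have hgrow := lyapunov_add_mul_le_of_isIntegralCurveOn hn ha hρ (hγ.isIntegralCurveOn _)
    (fun t ht => (h t ht.1).le) hc₀.le hc T ⟨hT, le_rfl⟩
  nlinarith [lyapunov_le ha.le (γ T), h T hT]

theorem exists_isIntegralCurveOn_Icc (hn : 0 < n) (ha : a < 0) {ρ : ℝ} (hρ : ρ * (4 - a) ≤ 1)
    (hρ₀ : 0 < ρ) {z₀ : ℝ × ℝ} (hz₀ : lyapunov a z₀ ≤ ρ) {T : ℝ} (hT : 0 ≤ T) :
    ∃ γ, γ 0 = z₀ ∧ IsIntegralCurveOn γ (fun _ => field n a) (Icc (-T) T) := by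
  set r := ρ + (1 - 2 * a) * T + 1
  have hρr : ρ + 1 ≤ r := by nlinarith
  have hr : 1 ≤ r := by linarith
  obtain ⟨G, K, L, hG, hGL, hGF⟩ :=
    (contDiff_field (n := n) (a := a)).exists_lipschitzWith_eqOn_closedBall r
  have hGr (z) (hz : energy z ≤ r) : G z = field n a z :=
    hGF (mem_closedBall_zero_of_energy_le hz hr)
  obtain ⟨γ, hγ₀, hγ⟩ := hG.exists_isIntegralCurveOn_Icc hGL z₀ hT
  have hsub : Icc 0 T ⊆ Icc (-T) T := Icc_subset_Icc_left (by linarith)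
  have hN₀ : energy (γ 0) ≤ ρ := hγ₀ ▸ (energy_le_lyapunov z₀).trans hz₀
  have hforward := energy_le_of_isIntegralCurveOn ha.le hGr (hγ.mono hsub) (by nlinarith)
  have hbackward := lyapunov_le_of_isIntegralCurveOn hn ha hρ hρ₀
    (fun z hz => by rw [Pi.neg_apply, hGr z (by linarith)]) (hγ.comp_neg_Icc.mono hsub)
    (by simpa [hγ₀] using hz₀)
  refine ⟨γ, hγ₀, fun t ht => ?_⟩
  have hr' : energy (γ t) ≤ r := by
    rcases le_total 0 t with h | h
    · nlinarith [hforward t ⟨h, ht.2⟩, ht.2]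
    · have := hbackward (-t) ⟨by linarith, by linarith [ht.1]⟩
      rw [neg_neg] at this
      linarith [energy_le_lyapunov (a := a) (γ t)]
  simpa only [hGr _ hr'] using hγ t ht

theorem exists_isIntegralCurve (hn : 0 < n) (ha : a < 0) {ρ : ℝ} (hρ : ρ * (4 - a) ≤ 1)
    (hρ₀ : 0 < ρ) {z₀ : ℝ × ℝ} (hz₀ : lyapunov a z₀ ≤ ρ) :
    ∃ γ, γ 0 = z₀ ∧ IsIntegralCurve γ (fun _ => field n a) :=
  exists_isIntegralCurve_of_isIntegralCurveOn_Ioo contDiff_field z₀ fun T => by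
    obtain ⟨γ, hγ₀, hγ⟩ := exists_isIntegralCurveOn_Icc hn ha hρ hρ₀ hz₀ (abs_nonneg T)
    refine ⟨γ, hγ₀, hγ.mono (Ioo_subset_Icc_self.trans (Icc_subset_Icc ?_ (le_abs_self T)))⟩
    linarith [le_abs_self T]

theorem isSolLienard_of_isIntegralCurve {γ : ℝ → ℝ × ℝ}
    (h : IsIntegralCurve γ (fun _ => field n a)) :
    IsSolLienard n a (fun t => (γ t).1) (fun t => (γ t).2) := fun t => by
  have h₁ := hasFDerivAt_fst.comp_hasDerivAt t (h t)
  have h₂ := hasFDerivAt_snd.comp_hasDerivAt t (h t)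
  exact ⟨h₁, h₂⟩

end Lienard

/-- For every positive integer `n` and every real `a < 0`, the origin is an unstable
equilibrium of the Liénard system `L_a`. -/
theorem lienard_origin_unstable (n : ℕ) (hn : 0 < n) (a : ℝ) (ha : a < 0) :
    ∃ ε > (0 : ℝ), ∀ δ > (0 : ℝ), ∃ x y : ℝ → ℝ, IsSolLienard n a x y ∧
      0 < x 0 ^ 2 + y 0 ^ 2 ∧ x 0 ^ 2 + y 0 ^ 2 < δ ^ 2 ∧
      ∃ t : ℝ, 0 ≤ t ∧ ε ^ 2 ≤ x t ^ 2 + y t ^ 2 := by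
  set ρ := (4 - a)⁻¹
  have hρ₀ : 0 < ρ := inv_pos.2 (by linarith)
  have hρ : ρ * (4 - a) ≤ 1 := (inv_mul_cancel₀ (by linarith)).le
  have hρ₁ : ρ ≤ 1 := inv_le_one_of_one_le₀ (by linarith)
  refine ⟨ρ, hρ₀, fun δ hδ => ?_⟩
  set s := min δ ρ / 2 with hs
  have hs₀ : 0 < s := by positivity
  have hsδ : s < δ := by linarith [min_le_left δ ρ]
  have hsρ : s ≤ ρ / 2 := by linarith [min_le_right δ ρ]
  obtain ⟨γ, hγ₀, hγ⟩ := Lienard.exists_isIntegralCurve hn ha hρ hρ₀ (z₀ := (s, 0))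
    (by simp only [Lienard.lyapunov]; nlinarith)
  have hE₀ : Lienard.energy (γ 0) = s ^ 2 := by simp [hγ₀, Lienard.energy]
  obtain ⟨t, ht, hρt⟩ :=
    Lienard.exists_energy_ge_of_isIntegralCurve hn ha hρ hγ (by rw [hE₀]; positivity)
  refine ⟨_, _, Lienard.isSolLienard_of_isIntegralCurve hγ, ?_, ?_, t, ht, ?_⟩
  · change 0 < Lienard.energy (γ 0)
    rw [hE₀]; positivity
  · change Lienard.energy (γ 0) < δ ^ 2
    rw [hE₀]; nlinarith
  · change ρ ^ 2 ≤ Lienard.energy (γ t)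
    nlinarith
end

section
/- Let n be a positive integer and a ≠ 0 a real number. For the planar vector field X(u, v) = (−au + v^{2n}(au − 1 − u²), −av + v^{2n+1}(a − u)) (the Poincaré compactification of the Liénard system L_a in the local chart U₁), the only point on the line v = 0 where X vanishes is (u, v) = (0, 0), and the Jacobian matrix of X at (0, 0) equals −a times the 2×2 identity matrix; in particular the origin of the chart U₁ is a hyperbolic node, attracting if a > 0 and repelling if a < 0. -/
open Filter

/-- The Poincaré compactification of the Liénard system `L_a` in the local chart `U₁`:
`X (u, v) = (-a u + v^(2n) (a u - 1 - u²), -a v + v^(2n+1) (a - u))`. -/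
noncomputable def chartU1Field (n : ℕ) (a : ℝ) : ℝ × ℝ → ℝ × ℝ :=
  fun p => (-a * p.1 + p.2 ^ (2 * n) * (a * p.1 - 1 - p.1 ^ 2),
            -a * p.2 + p.2 ^ (2 * n + 1) * (a - p.1))

/-!
The field is `-a • p` plus terms carrying a factor `v^(2n)` with `2n ≥ 2`; these vanish on
`v = 0` and do not contribute to the Jacobian at the origin. For stability, `r = u² + v²`
satisfies `ṙ / 2 = -a r + v^(2n) (a r - u (1 + r))`, and the perturbation is at most `|a| r / 2`
once `r ≤ (|a| / (2 (|a| + 2)))²`. After reversing time when `a < 0`, a comparison argument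
bounds `r` by `r(0) exp (-|a| t / 2)`.
-/

open Real Topology

theorem hasFDerivAt_pow_mul_of_eq_zero {𝕜 E : Type*} [NontriviallyNormedField 𝕜]
    [NormedAddCommGroup E] [NormedSpace 𝕜 E] {φ q : E → 𝕜} {φ' q' : E →L[𝕜] 𝕜} {x : E}
    {m : ℕ} (hm : 2 ≤ m) (hφ : HasFDerivAt φ φ' x) (hφx : φ x = 0) (hq : HasFDerivAt q q' x) :
    HasFDerivAt (fun y => φ y ^ m * q y) (0 : E →L[𝕜] 𝕜) x := by
  refine ((hφ.pow (𝔸 := 𝕜) m).fun_mul hq).congr_fderiv ?_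
  ext y
  simp [hφx, zero_pow (by omega : m ≠ 0), zero_pow (by omega : m - 1 ≠ 0)]

theorem chartU1Field_mk_zero_eq_zero_iff {n : ℕ} (hn : 0 < n) {a : ℝ} (ha : a ≠ 0) (u : ℝ) :
    chartU1Field n a (u, 0) = 0 ↔ u = 0 := by
  simp [chartU1Field, Prod.ext_iff, zero_pow (by omega : 2 * n ≠ 0), ha]

theorem hasFDerivAt_chartU1Field_zero {n : ℕ} (hn : 0 < n) (a : ℝ) :
    HasFDerivAt (chartU1Field n a) (-a • ContinuousLinearMap.id ℝ (ℝ × ℝ)) 0 := by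
  have h₁ : HasFDerivAt (fun p : ℝ × ℝ => p.2 ^ (2 * n) * (a * p.1 - 1 - p.1 ^ 2)) 0 0 :=
    hasFDerivAt_pow_mul_of_eq_zero (by omega) hasFDerivAt_snd rfl
      (by fun_prop : DifferentiableAt ℝ _ _).hasFDerivAt
  have h₂ : HasFDerivAt (fun p : ℝ × ℝ => p.2 ^ (2 * n + 1) * (a - p.1)) 0 0 :=
    hasFDerivAt_pow_mul_of_eq_zero (by omega) hasFDerivAt_snd rfl
      (by fun_prop : DifferentiableAt ℝ _ _).hasFDerivAt
  have hsplit : chartU1Field n a = fun p => -a • p +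
      (p.2 ^ (2 * n) * (a * p.1 - 1 - p.1 ^ 2), p.2 ^ (2 * n + 1) * (a - p.1)) := by
    ext p <;> simp [chartU1Field]
  rw [hsplit]
  exact (((-a • ContinuousLinearMap.id ℝ (ℝ × ℝ)).hasFDerivAt).add (h₁.prodMk h₂)).congr_fderiv
    (by ext <;> simp)

theorem le_mul_exp_neg_of_hasDerivAt_lt {g g' : ℝ → ℝ} {c ρ : ℝ} (hc : 0 ≤ c)
    (hg : ∀ t, HasDerivAt g (g' t) t) (hg₀ : 0 ≤ g 0) (hρ : g 0 < ρ)
    (hdecay : ∀ t, 0 < g t → g t < ρ → g' t < -c * g t) {t : ℝ} (ht : 0 ≤ t) :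
    g t ≤ g 0 * exp (-c * t) := by
  -- The fence theorem needs a strict inequality where `g` touches the barrier; the slack `η`
  -- keeps the barrier positive and below `ρ`.
  have hfence : ∀ η > 0, g 0 + η < ρ → g t ≤ (g 0 + η) * exp (-c * t) := by
    intro η hη hηρ
    have hB : ∀ s, HasDerivAt (fun s => (g 0 + η) * exp (-c * s))
        (-c * ((g 0 + η) * exp (-c * s))) s := fun s =>
      (((hasDerivAt_id' s).const_mul (-c)).exp.const_mul (g 0 + η)).congr_deriv (by ring)
    refine image_le_of_deriv_right_lt_deriv_boundary
      (fun s _ => (hg s).continuousAt.continuousWithinAt) (fun s _ => (hg s).hasDerivWithinAt)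
      (by simp [hη.le]) hB (fun s hs hgs => ?_) ⟨ht, le_rfl⟩
    have hexp : exp (-c * s) ≤ 1 := exp_le_one_iff.2 (by nlinarith [hs.1])
    rw [← hgs]
    refine hdecay s (hgs ▸ by positivity) (hgs ▸ ?_)
    nlinarith [exp_pos (-c * s)]
  refine le_of_forall_pos_le_add fun ε hε => ?_
  set η := min ε ((ρ - g 0) / 2)
  have hη : 0 < η := lt_min hε (by linarith)
  have hexp : exp (-c * t) ≤ 1 := exp_le_one_iff.2 (by nlinarith)
  calc g t ≤ (g 0 + η) * exp (-c * t) :=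
        hfence η hη (by linarith [min_le_right ε ((ρ - g 0) / 2)])
    _ ≤ g 0 * exp (-c * t) + η := by nlinarith [exp_pos (-c * t)]
    _ ≤ g 0 * exp (-c * t) + ε := by linarith [min_le_left ε ((ρ - g 0) / 2)]

def sqRadius (p : ℝ × ℝ) : ℝ := p.1 ^ 2 + p.2 ^ 2

noncomputable def basinRadius (a : ℝ) : ℝ := |a| / (2 * (|a| + 2))

theorem sqRadius_nonneg (p : ℝ × ℝ) : 0 ≤ sqRadius p := by
  unfold sqRadius; positivity

theorem sq_norm_le_sqRadius (p : ℝ × ℝ) : ‖p‖ ^ 2 ≤ sqRadius p := by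
  rw [Prod.norm_def, Real.norm_eq_abs, Real.norm_eq_abs, sqRadius]
  rcases le_total |p.1| |p.2| with h | h
  · rw [max_eq_right h, sq_abs]; nlinarith
  · rw [max_eq_left h, sq_abs]; nlinarith

theorem sqRadius_le_two_mul_sq_norm (p : ℝ × ℝ) : sqRadius p ≤ 2 * ‖p‖ ^ 2 := by
  have h₁ : p.1 ^ 2 ≤ ‖p‖ ^ 2 := by
    rw [← sq_abs]; exact pow_le_pow_left₀ (abs_nonneg _) (norm_fst_le p) 2
  have h₂ : p.2 ^ 2 ≤ ‖p‖ ^ 2 := by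
    rw [← sq_abs]; exact pow_le_pow_left₀ (abs_nonneg _) (norm_snd_le p) 2
  rw [sqRadius]; linarith

theorem HasDerivAt.sqRadius_comp {γ : ℝ → ℝ × ℝ} {γ' : ℝ × ℝ} {t : ℝ} (h : HasDerivAt γ γ' t) :
    HasDerivAt (fun s => sqRadius (γ s)) (2 * ((γ t).1 * γ'.1 + (γ t).2 * γ'.2)) t := by
  have h₁ : HasDerivAt (fun s => (γ s).1) γ'.1 t := h.fst
  have h₂ : HasDerivAt (fun s => (γ s).2) γ'.2 t := h.snd
  exact ((h₁.pow 2).add (h₂.pow 2)).congr_deriv (by ring)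

theorem fst_mul_add_snd_mul_chartU1Field (n : ℕ) (a : ℝ) (p : ℝ × ℝ) :
    p.1 * (chartU1Field n a p).1 + p.2 * (chartU1Field n a p).2 =
      -a * sqRadius p + p.2 ^ (2 * n) * (a * sqRadius p - p.1 * (1 + sqRadius p)) := by
  simp only [chartU1Field, sqRadius]; ring

theorem abs_snd_pow_mul_le {n : ℕ} (hn : 0 < n) (a : ℝ) {p : ℝ × ℝ}
    (hp : sqRadius p ≤ basinRadius a ^ 2) :
    |p.2 ^ (2 * n) * (a * sqRadius p - p.1 * (1 + sqRadius p))| ≤ |a| / 2 * sqRadius p := by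
  set d := basinRadius a
  set r := sqRadius p
  have hd₀ : 0 ≤ d := by simp only [d, basinRadius]; positivity
  have hd₁ : d ≤ 1 / 2 := by
    simp only [d, basinRadius]
    rw [div_le_div_iff₀ (by positivity) two_pos]; linarith [abs_nonneg a]
  have hu₂ : p.1 ^ 2 ≤ r := by simp only [r, sqRadius]; nlinarith
  have hv₂ : p.2 ^ 2 ≤ r := by simp only [r, sqRadius]; nlinarith
  have hr₀ : 0 ≤ r := (sq_nonneg _).trans hu₂
  have hrd : r ≤ d := by nlinarith
  have hu : |p.1| ≤ d := (sq_le_sq₀ (abs_nonneg _) hd₀).1 (by rw [sq_abs]; nlinarith)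
  have hv : p.2 ^ (2 * n) ≤ r := calc
    p.2 ^ (2 * n) = (p.2 ^ 2) ^ n := pow_mul _ _ _
    _ ≤ (p.2 ^ 2) ^ 1 := pow_le_pow_of_le_one (sq_nonneg _) (by linarith) hn
    _ ≤ r := by rwa [pow_one]
  have hE : |a * r - p.1 * (1 + r)| ≤ |a| / 2 := calc
    |a * r - p.1 * (1 + r)| ≤ |a| * r + |p.1| * (1 + r) := by
      simpa [abs_mul, abs_of_nonneg hr₀, abs_of_nonneg (by linarith : 0 ≤ 1 + r)]
        using abs_sub (a * r) (p.1 * (1 + r))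
    _ ≤ |a| * d + d * 2 := by gcongr; linarith
    _ = |a| / 2 := by simp only [d, basinRadius]; field_simp
  calc |p.2 ^ (2 * n) * (a * r - p.1 * (1 + r))|
        = p.2 ^ (2 * n) * |a * r - p.1 * (1 + r)| := by
        rw [abs_mul, abs_of_nonneg ((even_two_mul n).pow_nonneg _)]
    _ ≤ r * (|a| / 2) := mul_le_mul hv hE (abs_nonneg _) hr₀
    _ = |a| / 2 * r := mul_comm _ _

theorem mul_inner_chartU1Field_le {n : ℕ} (hn : 0 < n) {a σ : ℝ} (hσa : 0 < σ * a) {p : ℝ × ℝ}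
    (hp : sqRadius p ≤ basinRadius a ^ 2) :
    σ * (p.1 * (chartU1Field n a p).1 + p.2 * (chartU1Field n a p).2) ≤
      -(σ * a / 2) * sqRadius p := by
  have hR := abs_snd_pow_mul_le hn a hp
  set R := p.2 ^ (2 * n) * (a * sqRadius p - p.1 * (1 + sqRadius p))
  have hσR : σ * R ≤ σ * a / 2 * sqRadius p := calc
    σ * R ≤ |σ| * |R| := (le_abs_self _).trans (abs_mul σ R).le
    _ ≤ |σ| * (|a| / 2 * sqRadius p) := by gcongr
    _ = |σ * a| / 2 * sqRadius p := by rw [abs_mul]; ring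
    _ = σ * a / 2 * sqRadius p := by rw [abs_of_pos hσa]
  rw [fst_mul_add_snd_mul_chartU1Field]
  linarith

theorem smul_chartU1Field_asymptotically_stable {n : ℕ} (hn : 0 < n) {a σ : ℝ} (hσa : 0 < σ * a)
    {ε : ℝ} (hε : 0 < ε) :
    ∃ δ > (0 : ℝ), ∀ γ : ℝ → ℝ × ℝ, (∀ t, HasDerivAt γ (σ • chartU1Field n a (γ t)) t) →
      ‖γ 0‖ < δ → (∀ t, 0 ≤ t → ‖γ t‖ < ε) ∧ Tendsto γ atTop (𝓝 0) := by
  have ha : a ≠ 0 := by rintro rfl; simp at hσa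
  set ρ := min (basinRadius a ^ 2) (ε ^ 2)
  have hρ : 0 < ρ := by
    have : 0 < basinRadius a := by unfold basinRadius; positivity
    positivity
  refine ⟨√(ρ / 2), by positivity, fun γ hγ hγ₀ => ?_⟩
  have hdecay : ∀ t, 0 < sqRadius (γ t) → sqRadius (γ t) < ρ →
      2 * ((γ t).1 * (σ • chartU1Field n a (γ t)).1 + (γ t).2 * (σ • chartU1Field n a (γ t)).2)
        < -(σ * a / 2) * sqRadius (γ t) := by
    intro t hpos hlt
    have := mul_inner_chartU1Field_le hn hσa (hlt.le.trans (min_le_left _ _))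
    simp only [Prod.smul_fst, Prod.smul_snd, smul_eq_mul] at this ⊢
    nlinarith
  have hstart : sqRadius (γ 0) < ρ := by
    have := (Real.lt_sqrt (norm_nonneg _)).1 hγ₀
    linarith [sqRadius_le_two_mul_sq_norm (γ 0)]
  have hbound : ∀ t, 0 ≤ t → ‖γ t‖ ^ 2 ≤ sqRadius (γ 0) * exp (-(σ * a / 2) * t) :=
    fun t ht => (sq_norm_le_sqRadius _).trans <|
      le_mul_exp_neg_of_hasDerivAt_lt (half_pos hσa).le (fun t => (hγ t).sqRadius_comp)
        (sqRadius_nonneg _) hstart hdecay ht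
  refine ⟨fun t ht => ?_, ?_⟩
  · refine (pow_lt_pow_iff_left₀ (norm_nonneg _) hε.le two_ne_zero).1 ?_
    calc ‖γ t‖ ^ 2 ≤ sqRadius (γ 0) * exp (-(σ * a / 2) * t) := hbound t ht
      _ ≤ sqRadius (γ 0) := mul_le_of_le_one_right (sqRadius_nonneg _)
          (exp_le_one_iff.2 (by nlinarith))
      _ < ε ^ 2 := hstart.trans_le (min_le_right _ _)
  · have hexp : Tendsto (fun t => sqRadius (γ 0) * exp (-(σ * a / 2) * t)) atTop (𝓝 0) := by
      simpa using (tendsto_exp_atBot.comp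
        (tendsto_id.const_mul_atTop_of_neg (by linarith : -(σ * a / 2) < 0))).const_mul _
    have hsq : Tendsto (fun t => ‖γ t‖ ^ 2) atTop (𝓝 0) :=
      squeeze_zero' (.of_forall fun t => by positivity) ((eventually_ge_atTop 0).mono hbound) hexp
    rw [tendsto_zero_iff_norm_tendsto_zero]
    simpa [Real.sqrt_sq (norm_nonneg _)] using hsq.sqrt

/-- For `n ≥ 1` and `a ≠ 0`: the only zero of the chart-`U₁` field on the line `v = 0`
is the origin; the Jacobian at the origin is `-a` times the identity (so the origin is
a hyperbolic node); it is attracting if `a > 0` and repelling if `a < 0`. -/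
theorem chartU1_origin_node (n : ℕ) (hn : 0 < n) (a : ℝ) (ha : a ≠ 0) :
    (∀ u : ℝ, chartU1Field n a (u, 0) = 0 ↔ u = 0) ∧
    fderiv ℝ (chartU1Field n a) (0, 0) = -a • ContinuousLinearMap.id ℝ (ℝ × ℝ) ∧
    (0 < a → ∀ ε > (0 : ℝ), ∃ δ > (0 : ℝ), ∀ γ : ℝ → ℝ × ℝ,
      (∀ t : ℝ, HasDerivAt γ (chartU1Field n a (γ t)) t) → ‖γ 0‖ < δ →
      (∀ t : ℝ, 0 ≤ t → ‖γ t‖ < ε) ∧ Tendsto γ atTop (nhds (0, 0))) ∧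
    (a < 0 → ∀ ε > (0 : ℝ), ∃ δ > (0 : ℝ), ∀ γ : ℝ → ℝ × ℝ,
      (∀ t : ℝ, HasDerivAt γ (chartU1Field n a (γ t)) t) → ‖γ 0‖ < δ →
      (∀ t : ℝ, t ≤ 0 → ‖γ t‖ < ε) ∧ Tendsto γ atBot (nhds (0, 0))) := by
  refine ⟨chartU1Field_mk_zero_eq_zero_iff hn ha, (hasFDerivAt_chartU1Field_zero hn a).fderiv,
    fun hpos ε hε => ?_, fun hneg ε hε => ?_⟩
  · obtain ⟨δ, hδ, hstable⟩ :=
      smul_chartU1Field_asymptotically_stable hn (a := a) (σ := 1) (by simpa) hε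
    exact ⟨δ, hδ, fun γ hγ hγ₀ => hstable γ (by simpa using hγ) hγ₀⟩
  · obtain ⟨δ, hδ, hstable⟩ :=
      smul_chartU1Field_asymptotically_stable hn (a := a) (σ := -1) (by linarith) hε
    refine ⟨δ, hδ, fun γ hγ hγ₀ => ?_⟩
    obtain ⟨hbound, htendsto⟩ :=
      hstable (fun t => γ (-t)) (fun t => (hγ (-t)).scomp t (hasDerivAt_neg t)) (by simpa)
    exact ⟨fun t ht => by simpa using hbound (-t) (by linarith),
      (htendsto.comp tendsto_neg_atBot_atTop).congr fun t => congrArg γ (neg_neg t)⟩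
end
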